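/- Let Ω ⊂ ℝ^d have finite measure, p ∈ (0,1), ε > 0. Then the map u ↦ G_ε(u) := ∫_Ω ψ_ε(u(x)²) dx is Fréchet differentiable from L²(Ω) to ℝ with derivative G_ε'(u)h = ∫_Ω 2·u(x)·ψ_ε'(u(x)²)·h(x) dx. -/

import Mathlib

open Set MeasureTheory Filter Topology

noncomputable def psiSm (p ε t : ℝ) : ℝ :=
  if t < ε ^ 2 then (p / 2) * t / ε ^ (2 - p) + (1 - p / 2) * ε ^ p else t ^ (p / 2)

/-- The derivative ψ_ε'. -/
noncomputable def psiSmDeriv (p ε t : ℝ) : ℝ :=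
  if t = 0 then (p / 2) * ε ^ (p - 2) else (p / 2) * min (ε ^ (p - 2)) (t ^ ((p - 2) / 2))

/-!
Write `φ s = ψ_ε (s²)`. By the chain rule `φ' s = 2 s ψ_ε'(s²) = p s max(ε, |s|)^(p-2)`, an odd
function that is linear on `[-ε, ε]` and equals `p s^(p-1)` on `[ε, ∞)`, where its slope
`p |p-1| s^(p-2)` is at most `L = p ε^(p-2)`; so `φ'` is `L`-Lipschitz. A Lipschitz derivative gives
the pointwise Taylor bound `|φ b - φ a - φ' a (b - a)| ≤ L (b - a)²`, and integrating it with
`a = u x`, `b = u x + h x` bounds the remainder of `G_ε` at `u` by `L ‖h‖²`. Linear growth of `φ'`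
puts `φ' ∘ u` in `L²`, and quadratic growth of `φ` makes `φ ∘ v` integrable on a set of finite
measure.
-/

open scoped NNReal ENNReal

theorem LipschitzOnWith.union_of_le_of_ge {E : Type*} [PseudoMetricSpace E] {f : ℝ → E}
    {K : ℝ≥0} {s t : Set ℝ} {c : ℝ} (hs : ∀ x ∈ s, x ≤ c) (ht : ∀ x ∈ t, c ≤ x)
    (hcs : c ∈ s) (hct : c ∈ t) (hfs : LipschitzOnWith K f s) (hft : LipschitzOnWith K f t) :
    LipschitzOnWith K f (s ∪ t) := by
  rw [lipschitzOnWith_iff_dist_le_mul] at *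
  have across : ∀ x ∈ s, ∀ y ∈ t, dist (f x) (f y) ≤ K * dist x y := fun x hx y hy =>
    calc dist (f x) (f y) ≤ dist (f x) (f c) + dist (f c) (f y) := dist_triangle _ _ _
      _ ≤ K * dist x c + K * dist c y := add_le_add (hfs x hx c hcs) (hft c hct y hy)
      _ = K * dist x y := by
        rw [Real.dist_eq, Real.dist_eq, Real.dist_eq, abs_of_nonpos (by linarith [hs x hx]),
          abs_of_nonpos (by linarith [ht y hy]), abs_of_nonpos (by linarith [hs x hx, ht y hy])]
        ring
  rintro x (hx | hx) y (hy | hy)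
  · exact hfs x hx y hy
  · exact across x hx y hy
  · rw [dist_comm, dist_comm x]; exact across y hy x hx
  · exact hft x hx y hy

theorem lipschitzWith_of_odd {g : ℝ → ℝ} {K : ℝ≥0} (hodd : ∀ x, g (-x) = -g x)
    (hg : LipschitzOnWith K g (Ici 0)) : LipschitzWith K g := by
  have hneg : LipschitzOnWith K g (Iic 0) := by
    rw [lipschitzOnWith_iff_dist_le_mul] at *
    intro x hx y hy
    simpa [hodd, dist_neg_neg] using
      hg (-x) (neg_nonneg.2 (mem_Iic.1 hx)) (-y) (neg_nonneg.2 (mem_Iic.1 hy))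
  rw [← lipschitzOnWith_univ, ← Iic_union_Ici]
  exact hneg.union_of_le_of_ge (fun _ => id) (fun _ => id) self_mem_Iic self_mem_Ici hg

theorem lipschitzWith_mul_max_abs_rpow {ε q : ℝ} (hε : 0 < ε) (hq : -2 ≤ q) (hq0 : q ≤ 0) :
    LipschitzWith (ε ^ q).toNNReal fun s : ℝ => s * max ε |s| ^ q := by
  have hεq : 0 ≤ ε ^ q := by positivity
  refine lipschitzWith_of_odd (fun x => by rw [abs_neg]; ring) ?_
  rw [← Icc_union_Ici_eq_Ici hε.le]
  refine LipschitzOnWith.union_of_le_of_ge (fun x hx => hx.2) (fun x hx => hx)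
    (right_mem_Icc.2 hε.le) self_mem_Ici ?_ ?_
  · rw [lipschitzOnWith_iff_norm_sub_le]
    intro x hx y hy
    rw [abs_of_nonneg hx.1, abs_of_nonneg hy.1, max_eq_left hx.2, max_eq_left hy.2,
      ← sub_mul, norm_mul, Real.norm_of_nonneg hεq, Real.coe_toNNReal _ hεq, mul_comm]
  · have hpow : EqOn (fun s : ℝ => s * max ε |s| ^ q) (fun s => s ^ (q + 1)) (Ici ε) :=
      fun x hx => by
        have hx0 : 0 < x := hε.trans_le hx
        show x * max ε |x| ^ q = x ^ (q + 1)
        rw [abs_of_pos hx0, max_eq_right hx, Real.rpow_add_one hx0.ne', mul_comm]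
    refine (Convex.lipschitzOnWith_of_nnnorm_hasDerivWithin_le (convex_Ici ε)
      (fun x hx => ((Real.hasDerivAt_rpow_const (p := q + 1)
        (Or.inl (hε.trans_le hx).ne')).hasDerivWithinAt.congr hpow (hpow hx))) ?_)
    intro x hx
    rw [← NNReal.coe_le_coe, coe_nnnorm, Real.coe_toNNReal _ hεq, add_sub_cancel_right,
      norm_mul, Real.norm_of_nonneg (Real.rpow_nonneg (hε.le.trans hx) _)]
    have h1 : ‖q + 1‖ ≤ 1 := by rw [Real.norm_eq_abs, abs_le]; constructor <;> linarith
    calc ‖q + 1‖ * x ^ q ≤ 1 * ε ^ q :=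
          mul_le_mul h1 (Real.rpow_le_rpow_of_nonpos hε hx hq0)
            (Real.rpow_nonneg (hε.le.trans hx) _) zero_le_one
      _ = ε ^ q := one_mul _

theorem abs_sub_sub_mul_le_of_lipschitzWith_deriv {f f' : ℝ → ℝ} {K : ℝ≥0}
    (hf : ∀ x, HasDerivAt f (f' x) x) (hf' : LipschitzWith K f') (a b : ℝ) :
    |f b - f a - f' a * (b - a)| ≤ K * (b - a) ^ 2 := by
  have hmvt := Convex.norm_image_sub_le_of_norm_hasDerivWithin_le
    (f := fun x => f x - f' a * x) (f' := fun x => f' x - f' a) (C := K * |b - a|)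
    (fun x _ => (((hf x).sub ((hasDerivAt_id' x).const_mul (f' a))).congr_deriv
      (by rw [mul_one])).hasDerivWithinAt)
    (fun x hx => (hf'.norm_sub_le x a).trans
      (mul_le_mul_of_nonneg_left (abs_sub_left_of_mem_uIcc hx) K.coe_nonneg))
    (convex_uIcc a b) left_mem_uIcc right_mem_uIcc
  simp only [Real.norm_eq_abs] at hmvt
  calc |f b - f a - f' a * (b - a)| = |f b - f' a * b - (f a - f' a * a)| := by ring_nf
    _ ≤ K * |b - a| * |b - a| := hmvt
    _ = K * (b - a) ^ 2 := by rw [mul_assoc, abs_mul_abs_self, sq]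

section L2

variable {α : Type*} [MeasurableSpace α] {μ : Measure α} [IsFiniteMeasure μ]
  {f f' : ℝ → ℝ} {K : ℝ≥0}

theorem LipschitzWith.memLp_comp {g : ℝ → ℝ} (hg : LipschitzWith K g) {v : α → ℝ}
    {q : ℝ≥0∞} (hv : MemLp v q μ) : MemLp (fun x => g (v x)) q μ := by
  have hg0 : LipschitzWith K fun s => g s - g 0 := fun x y => by
    simpa only [edist_sub_right] using hg x y
  convert (hg0.comp_memLp (sub_self _) hv).add (memLp_const (g 0)) using 1
  ext x
  simp

theorem integrable_comp_of_lipschitzWith_deriv (hf : ∀ x, HasDerivAt f (f' x) x)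
    (hf' : LipschitzWith K f') {v : α → ℝ} (hv : MemLp v 2 μ) :
    Integrable (fun x => f (v x)) μ := by
  have hcont : Continuous f := continuous_iff_continuousAt.2 fun x => (hf x).continuousAt
  refine Integrable.mono' (g := fun x => |f 0| + |f' 0| * |v x| + K * v x ^ 2)
    (((integrable_const _).add ((hv.integrable one_le_two).abs.const_mul _)).add
      (hv.integrable_sq.const_mul _))
    (hcont.comp_aestronglyMeasurable hv.1) (Eventually.of_forall fun x => ?_)
  have htaylor := abs_sub_sub_mul_le_of_lipschitzWith_deriv hf hf' 0 (v x)
  rw [sub_zero] at htaylor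
  calc ‖f (v x)‖ = |(f (v x) - f 0 - f' 0 * v x) + f 0 + f' 0 * v x| := by
        rw [Real.norm_eq_abs]; ring_nf
    _ ≤ |f (v x) - f 0 - f' 0 * v x| + |f 0| + |f' 0 * v x| := abs_add_three _ _ _
    _ ≤ |f 0| + |f' 0| * |v x| + K * v x ^ 2 := by rw [abs_mul]; linarith

theorem abs_integral_comp_add_sub_sub_le (hf : ∀ x, HasDerivAt f (f' x) x)
    (hf' : LipschitzWith K f') {u h : α → ℝ} (hu : MemLp u 2 μ) (hh : MemLp h 2 μ) :
    |∫ x, f (u x + h x) ∂μ - ∫ x, f (u x) ∂μ - ∫ x, f' (u x) * h x ∂μ|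
      ≤ K * ∫ x, h x ^ 2 ∂μ := by
  have hint_uh : Integrable (fun x => f (u x + h x)) μ :=
    integrable_comp_of_lipschitzWith_deriv hf hf' (hu.add hh)
  have hint_u := integrable_comp_of_lipschitzWith_deriv hf hf' hu
  have hint_lin : Integrable (fun x => f' (u x) * h x) μ := (hf'.memLp_comp hu).integrable_mul hh
  have hint_diff : Integrable (fun x => f (u x + h x) - f (u x)) μ := hint_uh.sub hint_u
  rw [← integral_sub hint_uh hint_u, ← integral_sub hint_diff hint_lin, ← integral_const_mul]
  refine abs_integral_le_integral_abs.trans <| integral_mono (hint_diff.sub hint_lin).abs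
    (hh.integrable_sq.const_mul _) fun x => ?_
  simpa using abs_sub_sub_mul_le_of_lipschitzWith_deriv hf hf' (u x) (u x + h x)

theorem hasFDerivAt_integral_comp_Lp_two (hf : ∀ x, HasDerivAt f (f' x) x)
    (hf' : LipschitzWith K f') (u : Lp ℝ 2 μ) :
    ∃ D : Lp ℝ 2 μ →L[ℝ] ℝ, HasFDerivAt (fun v : Lp ℝ 2 μ => ∫ x, f (v x) ∂μ) D u ∧
      ∀ h : Lp ℝ 2 μ, D h = ∫ x, f' (u x) * h x ∂μ := by
  have hw := hf'.memLp_comp (Lp.memLp u)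
  have hD (h : Lp ℝ 2 μ) : innerSL ℝ (hw.toLp _) h = ∫ x, f' (u x) * h x ∂μ := by
    rw [innerSL_apply_apply, L2.inner_def]
    refine integral_congr_ae ?_
    filter_upwards [hw.coeFn_toLp] with x hx
    simp [hx, mul_comm]
  refine ⟨innerSL ℝ (hw.toLp _), ?_, hD⟩
  rw [hasFDerivAt_iff_isLittleO_nhds_zero]
  refine (Asymptotics.IsBigO.of_bound K (Eventually.of_forall fun h => ?_)).trans_isLittleO
    (Asymptotics.isLittleO_norm_pow_id one_lt_two)
  have hsq : ∫ x, h x ^ 2 ∂μ = ‖h‖ ^ 2 := by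
    rw [← real_inner_self_eq_norm_sq, L2.inner_def]
    simp [sq]
  have hadd : ∫ x, f ((u + h) x) ∂μ = ∫ x, f (u x + h x) ∂μ :=
    integral_congr_ae (by filter_upwards [Lp.coeFn_add u h] with x hx; rw [hx]; rfl)
  rw [hD, hadd, norm_pow, norm_norm, Real.norm_eq_abs, ← hsq]
  exact abs_integral_comp_add_sub_sub_le hf hf' (Lp.memLp u) (Lp.memLp h)

end L2

section psiSm

variable {p ε t : ℝ}

theorem sq_rpow_half {x : ℝ} (hx : 0 ≤ x) (r : ℝ) : (x ^ 2) ^ (r / 2) = x ^ r := by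
  rw [← Real.rpow_natCast, ← Real.rpow_mul hx, Nat.cast_ofNat, mul_div_cancel₀ r two_ne_zero]

theorem psiSm_of_le (hε : 0 < ε) (ht : t ≤ ε ^ 2) :
    psiSm p ε t = p / 2 * ε ^ (p - 2) * t + (1 - p / 2) * ε ^ p := by
  rcases ht.lt_or_eq with ht | rfl
  · rw [psiSm, if_pos ht, show p - 2 = -(2 - p) by ring, Real.rpow_neg hε.le]; ring
  · have hεp : ε ^ (p - 2) * ε ^ 2 = ε ^ p := by
      rw [← Real.rpow_natCast, ← Real.rpow_add hε]; norm_num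
    rw [psiSm, if_neg (lt_irrefl _), sq_rpow_half hε.le]
    linear_combination (-p / 2) * hεp

theorem psiSm_of_ge (ht : ε ^ 2 ≤ t) : psiSm p ε t = t ^ (p / 2) := by
  rw [psiSm, if_neg ht.not_gt]

theorem psiSmDeriv_of_le (hp2 : p ≤ 2) (hε : 0 < ε) (ht0 : 0 ≤ t) (ht : t ≤ ε ^ 2) :
    psiSmDeriv p ε t = p / 2 * ε ^ (p - 2) := by
  rcases ht0.eq_or_lt with rfl | ht0
  · rw [psiSmDeriv, if_pos rfl]
  · rw [psiSmDeriv, if_neg ht0.ne', min_eq_left]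
    rw [← sq_rpow_half hε.le]
    exact Real.rpow_le_rpow_of_nonpos ht0 ht (by linarith)

theorem psiSmDeriv_of_ge (hp2 : p ≤ 2) (hε : 0 < ε) (ht : ε ^ 2 ≤ t) :
    psiSmDeriv p ε t = p / 2 * t ^ ((p - 2) / 2) := by
  have ht0 : 0 < t := lt_of_lt_of_le (by positivity) ht
  rw [psiSmDeriv, if_neg ht0.ne', min_eq_right]
  rw [← sq_rpow_half hε.le]
  exact Real.rpow_le_rpow_of_nonpos (by positivity) ht (by linarith)

theorem hasDerivAt_psiSm (hp2 : p ≤ 2) (hε : 0 < ε) (ht0 : 0 ≤ t) :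
    HasDerivAt (psiSm p ε) (psiSmDeriv p ε t) t := by
  have left (ht : t ≤ ε ^ 2) :
      HasDerivWithinAt (psiSm p ε) (psiSmDeriv p ε t) (Iic (ε ^ 2)) t := by
    have hlin : HasDerivAt (fun x => p / 2 * ε ^ (p - 2) * x + (1 - p / 2) * ε ^ p)
        (p / 2 * ε ^ (p - 2)) t := by
      simpa using
        ((hasDerivAt_id t).const_mul (p / 2 * ε ^ (p - 2))).add_const ((1 - p / 2) * ε ^ p)
    rw [psiSmDeriv_of_le hp2 hε ht0 ht]
    exact hlin.hasDerivWithinAt.congr (fun x hx => psiSm_of_le hε hx) (psiSm_of_le hε ht)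
  have right (ht : ε ^ 2 ≤ t) :
      HasDerivWithinAt (psiSm p ε) (psiSmDeriv p ε t) (Ici (ε ^ 2)) t := by
    have hpow := Real.hasDerivAt_rpow_const (p := p / 2)
      (Or.inl (lt_of_lt_of_le (by positivity) ht).ne')
    rw [show p / 2 - 1 = (p - 2) / 2 by ring] at hpow
    rw [psiSmDeriv_of_ge hp2 hε ht]
    exact hpow.hasDerivWithinAt.congr (fun x hx => psiSm_of_ge hx) (psiSm_of_ge ht)
  rcases lt_trichotomy t (ε ^ 2) with ht | rfl | ht
  · exact (left ht.le).hasDerivAt (Iic_mem_nhds ht)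
  · simpa using (left le_rfl).union (right le_rfl)
  · exact (right ht.le).hasDerivAt (Ici_mem_nhds ht)

theorem psiSmDeriv_sq (hp2 : p ≤ 2) (hε : 0 < ε) (s : ℝ) :
    psiSmDeriv p ε (s ^ 2) = p / 2 * max ε |s| ^ (p - 2) := by
  rcases le_total |s| ε with hs | hs
  · rw [max_eq_left hs,
      psiSmDeriv_of_le hp2 hε (sq_nonneg s) (sq_le_sq' (abs_le.1 hs).1 (abs_le.1 hs).2)]
  · rw [max_eq_right hs, ← sq_abs, psiSmDeriv_of_ge hp2 hε (pow_le_pow_left₀ hε.le hs 2),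
      sq_rpow_half (abs_nonneg s)]

theorem hasDerivAt_psiSm_sq (hp2 : p ≤ 2) (hε : 0 < ε) (s : ℝ) :
    HasDerivAt (fun s => psiSm p ε (s ^ 2)) (2 * s * psiSmDeriv p ε (s ^ 2)) s := by
  refine ((hasDerivAt_psiSm hp2 hε (sq_nonneg s)).comp (h := fun x => x ^ 2) s
    (hasDerivAt_pow 2 s)).congr_deriv ?_
  norm_num
  ring

theorem lipschitzWith_two_mul_psiSmDeriv_sq (hp : 0 ≤ p) (hp2 : p ≤ 2) (hε : 0 < ε) :
    LipschitzWith (p * ε ^ (p - 2)).toNNReal fun s => 2 * s * psiSmDeriv p ε (s ^ 2) := by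
  have h := (lipschitzWith_smul p).comp
    (lipschitzWith_mul_max_abs_rpow hε (by linarith : -2 ≤ p - 2) (by linarith))
  have heq : (fun s => 2 * s * psiSmDeriv p ε (s ^ 2))
      = (fun x => p • x) ∘ fun s => s * max ε |s| ^ (p - 2) := by
    funext s
    rw [Function.comp_apply, smul_eq_mul, psiSmDeriv_sq hp2 hε]
    ring
  rwa [Real.toNNReal_mul hp, Real.toNNReal_of_nonneg hp, ← Real.nnnorm_of_nonneg hp, heq]

end psiSm

theorem stmt8_general (d : ℕ) (Ω : Set (Fin d → ℝ))
    (hfin : volume Ω < ⊤) (p ε : ℝ) (hp : 0 < p) (hp1 : p < 1) (hε : 0 < ε)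
    (u : Lp ℝ 2 (volume.restrict Ω)) :
    ∃ D : Lp ℝ 2 (volume.restrict Ω) →L[ℝ] ℝ,
      HasFDerivAt
        (fun v : Lp ℝ 2 (volume.restrict Ω) =>
          ∫ x, psiSm p ε ((v x) ^ 2) ∂(volume.restrict Ω)) D u ∧
      ∀ h : Lp ℝ 2 (volume.restrict Ω),
        D h = ∫ x, 2 * u x * psiSmDeriv p ε ((u x) ^ 2) * h x ∂(volume.restrict Ω) := by
  have : IsFiniteMeasure (volume.restrict Ω) := isFiniteMeasure_restrict.2 hfin.ne
  have hp2 : p ≤ 2 := by linarith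
  exact hasFDerivAt_integral_comp_Lp_two (hasDerivAt_psiSm_sq hp2 hε)
    (lipschitzWith_two_mul_psiSmDeriv_sq hp.le hp2 hε) u

theorem stmt8 (d : ℕ) (Ω : Set (Fin d → ℝ)) (hΩ : MeasurableSet Ω)
    (hfin : volume Ω < ⊤) (p ε : ℝ) (hp : 0 < p) (hp1 : p < 1) (hε : 0 < ε)
    (u : Lp ℝ 2 (volume.restrict Ω)) :
    ∃ D : Lp ℝ 2 (volume.restrict Ω) →L[ℝ] ℝ,
      HasFDerivAt
        (fun v : Lp ℝ 2 (volume.restrict Ω) =>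
          ∫ x, psiSm p ε ((v x) ^ 2) ∂(volume.restrict Ω)) D u ∧
      ∀ h : Lp ℝ 2 (volume.restrict Ω),
        D h = ∫ x, 2 * u x * psiSmDeriv p ε ((u x) ^ 2) * h x ∂(volume.restrict Ω) :=
  stmt8_general d Ω hfin p ε hp hp1 hε u
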